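/- arXiv:1010.5413 — 3 statements merged into one kernel-verified Lean document; each statement's English description precedes it below -/
import Mathlib

section
/- Let M be a smooth manifold, H a closed (n+1)-form, and X, Y vector fields, and consider the modified bracket [L_X + B∂_t, L_Y + C∂_t]_H = L_{[X,Y]} + (L_X C - L_Y B + dι_Yι_X H)∂_t on pairs (X,B). If L_X H = dB and L_Y H = dC, then L_{[X,Y]}H = d(L_X C - L_Y B + dι_Yι_X H), so the modified bracket is again a degree 0 symmetry. -/
/-- Abstract Cartan calculus: a Lie algebra `V` of "vector fields" acting on an
ℝ-module `Ω` of "differential forms" by Lie derivative `lie` and contraction `iota`,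
with the de Rham differential `d`, satisfying the standard Cartan identities. -/
structure CartanCtx (V Ω : Type*) [LieRing V] [Module ℝ V]
    [AddCommGroup Ω] [Module ℝ Ω] where
  d : Ω →ₗ[ℝ] Ω
  iota : V →ₗ[ℝ] Ω →ₗ[ℝ] Ω
  lie : V →ₗ[ℝ] Ω →ₗ[ℝ] Ω
  d_d : ∀ ω, d (d ω) = 0
  cartan : ∀ x ω, lie x ω = d (iota x ω) + iota x (d ω)
  lie_d : ∀ x ω, lie x (d ω) = d (lie x ω)
  lie_iota : ∀ x y ω, lie x (iota y ω) - iota y (lie x ω) = iota ⁅x, y⁆ ω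
  lie_lie : ∀ x y ω, lie x (lie y ω) - lie y (lie x ω) = lie ⁅x, y⁆ ω
  iota_iota : ∀ x y ω, iota x (iota y ω) = -iota y (iota x ω)

/-- For `H` a closed `(n+1)`-form and the `H`-twisted bracket
`[L_X + B∂_t, L_Y + C∂_t]_H = L_{[X,Y]} + (L_X C - L_Y B + dι_Yι_X H)∂_t`:
if `L_X H = dB` and `L_Y H = dC`, then
`L_{[X,Y]}H = d(L_X C - L_Y B + dι_Yι_X H)`, so the twisted bracket of two degree 0
symmetries is again a degree 0 symmetry. -/
theorem stmt6 {V Ω : Type*} [LieRing V] [Module ℝ V] [AddCommGroup Ω] [Module ℝ Ω]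
    (C : CartanCtx V Ω) (H B Cfrm : Ω) (X Y : V)
    (hH : C.d H = 0)
    (hXB : C.lie X H = C.d B) (hYC : C.lie Y H = C.d Cfrm) :
    C.lie ⁅X, Y⁆ H
      = C.d (C.lie X Cfrm - C.lie Y B + C.d (C.iota Y (C.iota X H))) := by
  have h := C.lie_lie X Y H
  rw [hYC, hXB, C.lie_d, C.lie_d] at h
  rw [← h]
  simp [map_add, map_sub, C.d_d]
end

section
/- Let M be a smooth manifold, H a closed (n+1)-form, 𝔤 a Lie algebra acting by vector fields a ↦ X_a with L_{X_a}H = 0, and suppose ξ_a ∈ Ω^{n-1}(M) depend linearly on a and satisfy dξ_a + ι_{X_a}H = 0 and L_{X_a}ξ_b = ξ_{[a,b]}. Then the functions c_{a,b} := ι_{X_a}ξ_b + ι_{X_b}ξ_a are locally constant (i.e. d c_{a,b} = 0). -/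
namespace CartanCtx

variable {V Ω : Type*} [LieRing V] [Module ℝ V] [AddCommGroup Ω] [Module ℝ Ω]
  (C : CartanCtx V Ω)

theorem d_iota (x : V) (ω : Ω) : C.d (C.iota x ω) = C.lie x ω - C.iota x (C.d ω) :=
  eq_sub_of_add_eq (C.cartan x ω).symm

theorem iota_iota_add_iota_iota (x y : V) (ω : Ω) :
    C.iota x (C.iota y ω) + C.iota y (C.iota x ω) = 0 := by
  rw [C.iota_iota]
  exact neg_add_cancel _

theorem d_iota_add_iota (x y : V) (ωx ωy : Ω) :
    C.d (C.iota x ωy + C.iota y ωx) =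
      (C.lie x ωy + C.lie y ωx) - (C.iota x (C.d ωy) + C.iota y (C.d ωx)) := by
  rw [map_add, C.d_iota, C.d_iota]
  abel

theorem iota_d_add_iota_d_of_hamiltonian {x y : V} {ωx ωy H : Ω}
    (hx : C.d ωx + C.iota x H = 0) (hy : C.d ωy + C.iota y H = 0) :
    C.iota x (C.d ωy) + C.iota y (C.d ωx) = 0 := by
  rw [eq_neg_of_add_eq_zero_left hx, eq_neg_of_add_eq_zero_left hy, map_neg, map_neg,
    ← neg_add, C.iota_iota_add_iota_iota, neg_zero]

theorem lie_add_lie_of_equivariant {𝔤 F : Type*} [LieRing 𝔤] [FunLike F 𝔤 Ω]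
    [AddMonoidHomClass F 𝔤 Ω] {X : 𝔤 → V} {ξ : F}
    (hequiv : ∀ a b : 𝔤, C.lie (X a) (ξ b) = ξ ⁅a, b⁆) (a b : 𝔤) :
    C.lie (X a) (ξ b) + C.lie (X b) (ξ a) = 0 := by
  rw [hequiv, hequiv, ← map_add, ← lie_skew b a, add_neg_cancel, map_zero]

end CartanCtx

theorem stmt12_general {V Ω 𝔤 : Type*} [LieRing V] [Module ℝ V] [AddCommGroup Ω] [Module ℝ Ω]
    [LieRing 𝔤] [Module ℝ 𝔤]
    (C : CartanCtx V Ω) (H : Ω)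
    (Xv : 𝔤 →ₗ[ℝ] V)
    (ξ : 𝔤 →ₗ[ℝ] Ω)
    (hham : ∀ a : 𝔤, C.d (ξ a) + C.iota (Xv a) H = 0)
    (hequiv : ∀ a b : 𝔤, C.lie (Xv a) (ξ b) = ξ ⁅a, b⁆) :
    ∀ a b : 𝔤, C.d (C.iota (Xv a) (ξ b) + C.iota (Xv b) (ξ a)) = 0 := by
  intro a b
  rw [C.d_iota_add_iota, C.lie_add_lie_of_equivariant hequiv,
    C.iota_d_add_iota_d_of_hamiltonian (hham a) (hham b), sub_zero]

/-- Let `𝔤` act by vector fields `a ↦ X_a` on `M` with `L_{X_a}H = 0`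
for a closed `(n+1)`-form `H`, and let `a ↦ ξ_a ∈ Ω^{n-1}(M)` be linear with
`dξ_a + ι_{X_a}H = 0` and `L_{X_a}ξ_b = ξ_{[a,b]}`.  Then the functions
`c_{a,b} = ι_{X_a}ξ_b + ι_{X_b}ξ_a` are locally constant, i.e. `d c_{a,b} = 0`. -/
theorem stmt12 {V Ω 𝔤 : Type*} [LieRing V] [Module ℝ V] [AddCommGroup Ω] [Module ℝ Ω]
    [LieRing 𝔤] [Module ℝ 𝔤]
    (C : CartanCtx V Ω) (H : Ω) (hH : C.d H = 0)
    (Xv : 𝔤 →ₗ[ℝ] V) (hXv : ∀ a b, Xv ⁅a, b⁆ = ⁅Xv a, Xv b⁆)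
    (ξ : 𝔤 →ₗ[ℝ] Ω)
    (hinv : ∀ a : 𝔤, C.lie (Xv a) H = 0)
    (hham : ∀ a : 𝔤, C.d (ξ a) + C.iota (Xv a) H = 0)
    (hequiv : ∀ a b : 𝔤, C.lie (Xv a) (ξ b) = ξ ⁅a, b⁆) :
    ∀ a b : 𝔤, C.d (C.iota (Xv a) (ξ b) + C.iota (Xv b) (ξ a)) = 0 :=
  stmt12_general C H Xv ξ hham hequiv
end

section
/- Let M be a smooth manifold and H a closed (n+1)-form. The brackets on the Hamiltonian algebra Ham*(H), given on degree 0 elements (X,α),(Y,β) (with dα+ι_XH=0, dβ+ι_YH=0) by ⌊(X,α),(Y,β)⌋ = ([X,Y], L_Xβ), satisfy: d(L_Xβ) + ι_{[X,Y]}H = 0, i.e. the bracket of two Hamiltonian pairs is again a Hamiltonian pair. -/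
/-! Since `H` is closed and `ι_X H = -dα` is exact, Cartan's formula gives `L_X H = 0`, and then
`ι_{[X,Y]} H = L_X ι_Y H = -L_X dβ = -d L_X β`. -/

namespace CartanCtx

variable {V Ω : Type*} [LieRing V] [Module ℝ V] [AddCommGroup Ω] [Module ℝ Ω]
  (C : CartanCtx V Ω) {H : Ω}

def IsHamiltonian (H : Ω) (X : V) (α : Ω) : Prop :=
  C.d α + C.iota X H = 0

theorem IsHamiltonian.iota_eq {X : V} {α : Ω} (hX : C.IsHamiltonian H X α) :
    C.iota X H = -C.d α :=
  eq_neg_of_add_eq_zero_right hX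

theorem lie_eq_d_iota_of_d_eq_zero (hH : C.d H = 0) (X : V) :
    C.lie X H = C.d (C.iota X H) := by
  rw [C.cartan, hH, map_zero, add_zero]

theorem lie_eq_zero_of_isHamiltonian (hH : C.d H = 0) {X : V} {α : Ω}
    (hX : C.IsHamiltonian H X α) : C.lie X H = 0 := by
  rw [C.lie_eq_d_iota_of_d_eq_zero hH, hX.iota_eq, map_neg, C.d_d, neg_zero]

theorem isHamiltonian_bracket (hH : C.d H = 0) {X Y : V} {α β : Ω}
    (hX : C.IsHamiltonian H X α) (hY : C.IsHamiltonian H Y β) :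
    C.IsHamiltonian H ⁅X, Y⁆ (C.lie X β) := by
  have hbracket : C.iota ⁅X, Y⁆ H = -C.d (C.lie X β) := by
    rw [← C.lie_iota, C.lie_eq_zero_of_isHamiltonian hH hX, map_zero, sub_zero, hY.iota_eq,
      map_neg, C.lie_d]
  rw [IsHamiltonian, hbracket, add_neg_cancel]

end CartanCtx

/-- For `H` a closed `(n+1)`-form, the bracket
`⌊(X,α),(Y,β)⌋ = ([X,Y], L_X β)` of two Hamiltonian pairs (`dα + ι_X H = 0`,
`dβ + ι_Y H = 0`) is again a Hamiltonian pair: `d(L_X β) + ι_{[X,Y]}H = 0`. -/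
theorem stmt17 {V Ω : Type*} [LieRing V] [Module ℝ V] [AddCommGroup Ω] [Module ℝ Ω]
    (C : CartanCtx V Ω) (H α β : Ω) (X Y : V)
    (hH : C.d H = 0)
    (hX : C.d α + C.iota X H = 0) (hY : C.d β + C.iota Y H = 0) :
    C.d (C.lie X β) + C.iota ⁅X, Y⁆ H = 0 :=
  C.isHamiltonian_bracket hH hX hY
end
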